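/- In the ring A = ℝ[X,Y]/(X²+Y²−1), the element y (the class of Y) is irreducible. -/

import Mathlib

/-!
Identify `A` with the quadratic algebra `ℝ[x][ω]`, `ω² = 1 - x²`, where `y` becomes `ω`. The norm
`N(p + qω) = p² + (x² - 1) q²` is a multiplicative map to `ℝ[x]` that detects units, and
`N ω = x² - 1` has degree `2`. The leading coefficients of `p²` and `(x² - 1) q²` are both positive,
so they cannot cancel and every norm has even degree. Hence in a factorisation `y = u v` one of
`N u`, `N v` is a nonzero constant, i.e. one factor is a unit.
-/

open Polynomial QuadraticAlgebra

noncomputable section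

namespace Polynomial

variable {R : Type*} [CommRing R] [LinearOrder R] [IsStrictOrderedRing R]

theorem even_natDegree_sq_add_mul_sq {c : R[X]} (hc : 0 < c.leadingCoeff)
    (hc' : Even c.natDegree) (p q : R[X]) : Even (p ^ 2 + c * q ^ 2).natDegree := by
  rcases eq_or_ne q 0 with rfl | hq
  · simp [natDegree_pow]
  have hlc : (p ^ 2).leadingCoeff + (c * q ^ 2).leadingCoeff ≠ 0 := by
    rw [leadingCoeff_mul, leadingCoeff_pow, leadingCoeff_pow]
    have := leadingCoeff_ne_zero.mpr hq
    positivity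
  have hdeg := degree_add_eq_of_leadingCoeff_add_ne_zero hlc
  rcases max_choice (p ^ 2).degree (c * q ^ 2).degree with h | h <;> rw [h] at hdeg
  · rw [natDegree_eq_of_degree_eq hdeg, natDegree_pow]
    exact even_two_mul _
  · have hc0 : c ≠ 0 := leadingCoeff_ne_zero.mp hc.ne'
    rw [natDegree_eq_of_degree_eq hdeg, natDegree_mul hc0 (pow_ne_zero 2 hq), natDegree_pow]
    exact hc'.add (even_two_mul _)

end Polynomial

theorem irreducible_of_natDegree_map_eq_two {K M : Type*} [Field K] [Monoid M] (N : M →* K[X])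
    (hunit : ∀ z, IsUnit (N z) → IsUnit z) (heven : ∀ z, Even (N z).natDegree) {x : M}
    (hx : (N x).natDegree = 2) : Irreducible x := by
  have isUnit_of_natDegree_eq_zero : ∀ z, N z ≠ 0 → (N z).natDegree = 0 → IsUnit z :=
    fun z hz h => hunit z (isUnit_iff_degree_eq_zero.mpr ((degree_eq_iff_natDegree_eq hz).mpr h))
  refine ⟨fun hu => by simpa [hx] using natDegree_eq_zero_of_isUnit (hu.map N), fun u v huv => ?_⟩
  have hN : N u * N v = N x := by rw [huv, map_mul]
  have hx0 : N x ≠ 0 := ne_zero_of_natDegree_gt (n := 0) (by omega)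
  have hu0 : N u ≠ 0 := left_ne_zero_of_mul (hN ▸ hx0)
  have hv0 : N v ≠ 0 := right_ne_zero_of_mul (hN ▸ hx0)
  have hsum : (N u).natDegree + (N v).natDegree = 2 := by rw [← natDegree_mul hu0 hv0, hN, hx]
  obtain ⟨k, hk⟩ := heven u
  obtain ⟨l, hl⟩ := heven v
  rcases (by omega : (N u).natDegree = 0 ∨ (N v).natDegree = 0) with h | h
  · exact .inl (isUnit_of_natDegree_eq_zero u hu0 h)
  · exact .inr (isUnit_of_natDegree_eq_zero v hv0 h)

namespace QuadraticAlgebra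

theorem even_natDegree_norm {R : Type*} [CommRing R] [LinearOrder R] [IsStrictOrderedRing R]
    {a : R[X]} (ha : a.leadingCoeff < 0) (ha' : Even a.natDegree)
    (z : QuadraticAlgebra R[X] a 0) : Even (norm z).natDegree := by
  have hz : norm z = z.re ^ 2 + -a * z.im ^ 2 := by rw [norm_def]; ring
  rw [hz]
  exact even_natDegree_sq_add_mul_sq (by rwa [leadingCoeff_neg, neg_pos])
    (by rwa [natDegree_neg]) _ _

theorem irreducible_omega {K : Type*} [Field K] [LinearOrder K] [IsStrictOrderedRing K]
    {a : K[X]} (ha : a.natDegree = 2) (ha' : a.leadingCoeff < 0) :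
    Irreducible (ω : QuadraticAlgebra K[X] a 0) :=
  irreducible_of_natDegree_map_eq_two norm (fun _ => isUnit_iff_norm_isUnit.mpr)
    (even_natDegree_norm ha' (ha ▸ even_two)) (by simp [norm_def, ha])

end QuadraticAlgebra

variable (R : Type*) [CommRing R]

abbrev CircleRing : Type _ :=
  MvPolynomial (Fin 2) R ⧸
    Ideal.span {(MvPolynomial.X 0 : MvPolynomial (Fin 2) R) ^ 2 + MvPolynomial.X 1 ^ 2 - 1}

namespace CircleRing

abbrev x : CircleRing R := Ideal.Quotient.mk _ (MvPolynomial.X 0)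

abbrev y : CircleRing R := Ideal.Quotient.mk _ (MvPolynomial.X 1)

theorem x_sq_add_y_sq : x R ^ 2 + y R ^ 2 = 1 := by
  rw [← sub_eq_zero, ← map_pow, ← map_pow, ← map_add, ← map_one (Ideal.Quotient.mk _), ← map_sub,
    Ideal.Quotient.eq_zero_iff_mem]
  exact Ideal.subset_span rfl

def toQuadraticAlgebra : CircleRing R →ₐ[R] QuadraticAlgebra R[X] (1 - X ^ 2) 0 :=
  Ideal.Quotient.liftₐ _ (MvPolynomial.aeval ![algebraMap R[X] _ X, ω]) <| by
    intro f hf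
    obtain ⟨g, rfl⟩ := Ideal.mem_span_singleton'.mp hf
    have hω : (ω : QuadraticAlgebra R[X] (1 - X ^ 2) 0) ^ 2 = algebraMap _ _ (1 - X ^ 2 : R[X]) := by
      rw [sq ω, omega_mul_omega_eq_algebraMap, map_zero, zero_mul, add_zero]
    simp only [map_mul, map_sub, map_add, map_pow, MvPolynomial.aeval_X, map_one]
    refine mul_eq_zero_of_right _ ?_
    rw [Matrix.cons_val_zero, Matrix.cons_val_one, Matrix.cons_val_zero, hω, ← map_pow, ← map_add,
      add_sub_cancel, map_one, sub_self]

def ofQuadraticAlgebra : QuadraticAlgebra R[X] (1 - X ^ 2) 0 →+* CircleRing R :=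
  letI : Algebra R[X] (CircleRing R) := (aeval (x R)).toAlgebra
  (QuadraticAlgebra.lift ⟨y R, by
    simp only [Algebra.smul_def, RingHom.algebraMap_toAlgebra, AlgHom.toRingHom_eq_coe,
      RingHom.coe_coe, map_sub, map_one, map_pow, aeval_X, map_zero]
    linear_combination x_sq_add_y_sq R⟩).toRingHom

theorem toQuadraticAlgebra_mk (p : MvPolynomial (Fin 2) R) :
    toQuadraticAlgebra R (Ideal.Quotient.mk _ p) = MvPolynomial.aeval ![algebraMap R[X] _ X, ω] p :=
  rfl

theorem toQuadraticAlgebra_y : toQuadraticAlgebra R (y R) = ω := by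
  rw [toQuadraticAlgebra_mk, MvPolynomial.aeval_X, Matrix.cons_val_one, Matrix.cons_val_zero]

theorem toQuadraticAlgebra_aeval_x (p : R[X]) :
    toQuadraticAlgebra R (aeval (x R) p) = algebraMap R[X] _ p := by
  rw [← aeval_algHom_apply, toQuadraticAlgebra_mk, MvPolynomial.aeval_X, Matrix.cons_val_zero,
    aeval_algebraMap_apply, aeval_X_left_apply]

theorem ofQuadraticAlgebra_apply (z : QuadraticAlgebra R[X] (1 - X ^ 2) 0) :
    ofQuadraticAlgebra R z = aeval (x R) z.re + aeval (x R) z.im * y R := by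
  simp [ofQuadraticAlgebra, Algebra.smul_def, RingHom.algebraMap_toAlgebra]

def equivQuadraticAlgebra : CircleRing R ≃+* QuadraticAlgebra R[X] (1 - X ^ 2) 0 :=
  RingEquiv.ofRingHom (toQuadraticAlgebra R) (ofQuadraticAlgebra R)
    (RingHom.ext fun z => by
      rw [RingHom.comp_apply, ofQuadraticAlgebra_apply, RingHom.coe_coe, map_add, map_mul,
        toQuadraticAlgebra_aeval_x, toQuadraticAlgebra_aeval_x, toQuadraticAlgebra_y,
        ← Algebra.smul_def, ← mk_eq_add_smul_omega]
      rfl)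
    (by
      refine Ideal.Quotient.ringHom_ext (MvPolynomial.ringHom_ext (fun r => ?_) (fun i => ?_))
      · change ofQuadraticAlgebra R (toQuadraticAlgebra R (algebraMap R _ r)) = algebraMap R _ r
        rw [AlgHom.commutes, IsScalarTower.algebraMap_apply R R[X], ofQuadraticAlgebra_apply]
        simp
      · fin_cases i <;> simp [toQuadraticAlgebra_mk, ofQuadraticAlgebra_apply])

theorem equivQuadraticAlgebra_y : equivQuadraticAlgebra R (y R) = ω :=
  toQuadraticAlgebra_y R

end CircleRing

end

open MvPolynomial

theorem stmt_4 :
    Irreducible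
      (Ideal.Quotient.mk
        (Ideal.span {(X 0 : MvPolynomial (Fin 2) ℝ) ^ 2 + X 1 ^ 2 - 1})
        (X 1)) := by
  have hw : (1 - Polynomial.X ^ 2 : ℝ[X]) = -(Polynomial.X ^ 2 - Polynomial.C 1) := by
    rw [Polynomial.C_1, neg_sub]
  have hω : Irreducible (ω : QuadraticAlgebra ℝ[X] (1 - Polynomial.X ^ 2) 0) :=
    irreducible_omega (by rw [hw, natDegree_neg, natDegree_X_pow_sub_C])
      (by rw [hw, leadingCoeff_neg, (monic_X_pow_sub_C _ two_ne_zero).leadingCoeff]; norm_num)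
  rw [← CircleRing.equivQuadraticAlgebra_y] at hω
  exact (MulEquiv.irreducible_iff _).mp hω
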